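/- arXiv:1602.06319 — 2 statements merged into one kernel-verified Lean document; each statement's English description precedes it below -/
import Mathlib

section
/- For 0 < q < 1, x ∈ [0,1], and nonnegative integers n, l, the q-Bernstein basis functions b_{n,l}^k(q;x) = binom(n+l,k)_q x^k (1-x)_q^{n+l-k} satisfy Σ_{k=0}^{n+l} b_{n,l}^k(q;x) q^k = 1 - (1-q)[n+l]_q x. -/
noncomputable section

/-- q-integer [n]_q = (1-q^n)/(1-q). -/
def qInt (q : ℝ) (n : ℕ) : ℝ := (1 - q ^ n) / (1 - q)

/-- q-factorial [n]_q!. -/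
def qFact (q : ℝ) (n : ℕ) : ℝ := ∏ i ∈ Finset.range n, qInt q (i + 1)

/-- q-binomial coefficient. -/
def qBinom (q : ℝ) (n k : ℕ) : ℝ := qFact q n / (qFact q k * qFact q (n - k))

/-- q-analogue (1-x)_q^m = ∏_{j<m} (1 - q^j x). -/
def qPoch (q x : ℝ) (m : ℕ) : ℝ := ∏ j ∈ Finset.range m, (1 - q ^ j * x)

/-- Riemann-type q-integral over [a,b]. -/
def qRInt (q a b : ℝ) (f : ℝ → ℝ) : ℝ :=
  (1 - q) * (b - a) * ∑' s : ℕ, f (a + (b - a) * q ^ s) * q ^ s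

/-- q-Bernstein-Schurer basis function b_{n,l}^k(q;x). -/
def bern (q : ℝ) (n l k : ℕ) (x : ℝ) : ℝ :=
  qBinom q (n + l) k * x ^ k * qPoch q x (n + l - k)

/-- Stancu-type q-Bernstein-Schurer-Kantorovich operator. -/
def Lop (q α β : ℝ) (n l : ℕ) (f : ℝ → ℝ) (x : ℝ) : ℝ :=
  (qInt q (n + 1) + β) * ∑ k ∈ Finset.range (n + l + 1),
    bern q n l k x * (q ^ k)⁻¹ *
      qRInt q ((qInt q k + α) / (qInt q (n + 1) + β))
        ((qInt q (k + 1) + α) / (qInt q (n + 1) + β)) f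

/-! The weighted sum satisfies the same two-term recurrence in `m` as the q-Bernstein basis
itself, `b_{m+1}^{k}(x) = x b_m^{k-1}(x) + (1 - x) b_m^k(qx)`, which comes from the q-Pascal rule
and `(1-x)_q^{m+1} = (1-x)(1-qx)_q^m`. With the weights `q^k` the recurrence reads
`S_{m+1}(x) = qx S_m(x) + (1 - x) S_m(qx)`, and `1 - (1 - q^m) x` solves it. -/

open Finset

def qBernstein (q : ℝ) (m k : ℕ) (x : ℝ) : ℝ :=
  qBinom q m k * x ^ k * qPoch q x (m - k)

lemma qInt_add (q : ℝ) (a b : ℕ) : qInt q (a + b) = qInt q a + q ^ a * qInt q b := by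
  simp only [qInt, pow_add]
  ring

lemma one_sub_mul_qInt {q : ℝ} (hq : q ≠ 1) (n : ℕ) : (1 - q) * qInt q n = 1 - q ^ n :=
  mul_div_cancel₀ _ (sub_ne_zero.mpr hq.symm)

lemma qInt_succ_ne_zero {q : ℝ} (hq : 0 ≤ q) (hq1 : q ≠ 1) (n : ℕ) : qInt q (n + 1) ≠ 0 :=
  div_ne_zero
    (sub_ne_zero.mpr fun h => hq1 ((pow_eq_one_iff_of_nonneg hq n.succ_ne_zero).mp h.symm))
    (sub_ne_zero.mpr hq1.symm)

lemma qFact_zero (q : ℝ) : qFact q 0 = 1 :=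
  prod_range_zero _

lemma qFact_succ (q : ℝ) (n : ℕ) : qFact q (n + 1) = qFact q n * qInt q (n + 1) :=
  prod_range_succ _ _

lemma qFact_ne_zero {q : ℝ} (hq : 0 ≤ q) (hq1 : q ≠ 1) (n : ℕ) : qFact q n ≠ 0 :=
  prod_ne_zero_iff.mpr fun i _ => qInt_succ_ne_zero hq hq1 i

lemma qBinom_zero_right {q : ℝ} (hq : 0 ≤ q) (hq1 : q ≠ 1) (n : ℕ) : qBinom q n 0 = 1 := by
  rw [qBinom, Nat.sub_zero, qFact_zero, one_mul, div_self (qFact_ne_zero hq hq1 n)]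

lemma qBinom_self {q : ℝ} (hq : 0 ≤ q) (hq1 : q ≠ 1) (n : ℕ) : qBinom q n n = 1 := by
  rw [qBinom, Nat.sub_self, qFact_zero, mul_one, div_self (qFact_ne_zero hq hq1 n)]

lemma qBinom_succ_succ {q : ℝ} (hq : 0 ≤ q) (hq1 : q ≠ 1) {m j : ℕ} (hj : j < m) :
    qBinom q (m + 1) (j + 1) = qBinom q m j + q ^ (j + 1) * qBinom q m (j + 1) := by
  obtain ⟨i, rfl⟩ : ∃ i, m = j + 1 + i := ⟨m - (j + 1), by omega⟩
  have hm : j + 1 + i + 1 = (j + 1) + (i + 1) := by omega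
  rw [qBinom, qBinom, qBinom, show j + 1 + i + 1 - (j + 1) = i + 1 by omega,
    show j + 1 + i - j = i + 1 by omega, show j + 1 + i - (j + 1) = i by omega,
    qFact_succ q (j + 1 + i), qFact_succ q j, qFact_succ q i, hm, qInt_add]
  have := qFact_ne_zero hq hq1 j
  have := qFact_ne_zero hq hq1 i
  have := qInt_succ_ne_zero hq hq1 j
  have := qInt_succ_ne_zero hq hq1 i
  field_simp

lemma qPoch_succ' (q x : ℝ) (m : ℕ) : qPoch q x (m + 1) = (1 - x) * qPoch q (q * x) m := by
  rw [qPoch, qPoch, prod_range_succ', pow_zero, one_mul, mul_comm]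
  congr 1
  exact prod_congr rfl fun i _ => by ring

section qBernstein

variable {q : ℝ} (hq : 0 ≤ q) (hq1 : q ≠ 1)
include hq hq1

lemma qBernstein_zero_zero (x : ℝ) : qBernstein q 0 0 x = 1 := by
  simp [qBernstein, qBinom_self hq hq1, qPoch]

lemma qBernstein_succ_zero (m : ℕ) (x : ℝ) :
    qBernstein q (m + 1) 0 x = (1 - x) * qBernstein q m 0 (q * x) := by
  simp only [qBernstein, qBinom_zero_right hq hq1, Nat.sub_zero, qPoch_succ']
  ring

lemma qBernstein_succ_self (m : ℕ) (x : ℝ) :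
    qBernstein q (m + 1) (m + 1) x = x * qBernstein q m m x := by
  simp only [qBernstein, qBinom_self hq hq1, Nat.sub_self]
  ring

lemma qBernstein_succ_succ {m j : ℕ} (hj : j < m) (x : ℝ) :
    qBernstein q (m + 1) (j + 1) x =
      x * qBernstein q m j x + (1 - x) * qBernstein q m (j + 1) (q * x) := by
  rw [qBernstein, qBernstein, qBernstein, qBinom_succ_succ hq hq1 hj,
    show m + 1 - (j + 1) = m - (j + 1) + 1 by omega, show m - j = m - (j + 1) + 1 by omega,
    qPoch_succ']
  ring

lemma sum_qBernstein_succ_mul (f : ℕ → ℝ) (m : ℕ) (x : ℝ) :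
    ∑ k ∈ range (m + 2), qBernstein q (m + 1) k x * f k =
      x * ∑ k ∈ range (m + 1), qBernstein q m k x * f (k + 1) +
        (1 - x) * ∑ k ∈ range (m + 1), qBernstein q m k (q * x) * f k := by
  have hmid : ∑ j ∈ range m, qBernstein q (m + 1) (j + 1) x * f (j + 1) =
      x * ∑ j ∈ range m, qBernstein q m j x * f (j + 1) +
        (1 - x) * ∑ j ∈ range m, qBernstein q m (j + 1) (q * x) * f (j + 1) := by
    rw [mul_sum, mul_sum, ← sum_add_distrib]
    refine sum_congr rfl fun j hj => ?_
    rw [qBernstein_succ_succ hq hq1 (mem_range.mp hj)]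
    ring
  rw [sum_range_succ, sum_range_succ', hmid, sum_range_succ _ m, sum_range_succ' _ m,
    qBernstein_succ_zero hq hq1, qBernstein_succ_self hq hq1]
  ring

theorem sum_qBernstein_mul_pow (m : ℕ) (x : ℝ) :
    ∑ k ∈ range (m + 1), qBernstein q m k x * q ^ k = 1 - (1 - q ^ m) * x := by
  induction m generalizing x with
  | zero => simp [qBernstein_zero_zero hq hq1]
  | succ m ih =>
    have hshift : ∑ k ∈ range (m + 1), qBernstein q m k x * q ^ (k + 1) =
        q * ∑ k ∈ range (m + 1), qBernstein q m k x * q ^ k := by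
      rw [mul_sum]
      exact sum_congr rfl fun k _ => by ring
    rw [sum_qBernstein_succ_mul hq hq1, hshift, ih, ih]
    ring

end qBernstein

theorem bern_qpow_sum_general (q x : ℝ) (hq : 0 < q) (hq1 : q < 1)
    (n l : ℕ) :
    ∑ k ∈ Finset.range (n + l + 1), bern q n l k x * q ^ k
      = 1 - (1 - q) * qInt q (n + l) * x := by
  rw [one_sub_mul_qInt hq1.ne]
  exact sum_qBernstein_mul_pow hq.le hq1.ne (n + l) x

theorem bern_qpow_sum (q x : ℝ) (hq : 0 < q) (hq1 : q < 1) (hx0 : 0 ≤ x) (hx1 : x ≤ 1)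
    (n l : ℕ) :
    ∑ k ∈ Finset.range (n + l + 1), bern q n l k x * q ^ k
      = 1 - (1 - q) * qInt q (n + l) * x :=
  bern_qpow_sum_general q x hq hq1 n l
end
end

section
/- Let L₁, L₂ be positive linear operators on C([0,a₁]) and C([0,a₂]) respectively with L₁(1)=1, L₂(1)=1, and define the tensor product operator L(f)(x,y) for f ∈ C([0,a₁]×[0,a₂]) so that L(g⊗h) = L₁(g)·L₂(h). If f ∈ Lip_M(α₁,α₂), i.e. |f(t,s)-f(x,y)| ≤ M|t-x|^{α₁}|s-y|^{α₂} with 0 < α₁, α₂ ≤ 1, then |L(f)(x,y) - f(x,y)| ≤ M (L₁((t-x)²)(x))^{α₁/2} (L₂((s-y)²)(y))^{α₂/2}. -/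
/-! A positive linear operator `L` reproducing constants satisfies Jensen's inequality
`L (g ^ p) ≤ (L g) ^ p` for the concave power `u ↦ u ^ p`, `0 ≤ p ≤ 1`: the power lies below
its tangent line at any `ε > L g`, which `L` maps to a number at most `ε ^ p`; then let
`ε ↓ L g`. With `g = (t - x) ^ 2` and `p = α / 2` this bounds `L (|t - x| ^ α) (x)`. The
Lipschitz condition dominates `|f - f (x, y)|` by `M • (|t - x| ^ α₁ ⊗ |s - y| ^ α₂)`, which the
tensor product operator maps to the product of the two univariate bounds. -/

noncomputable section

/-- The tensor product g ⊗ h of continuous functions on the product of two intervals. -/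
def tensorFn (a₁ a₂ : ℝ) (g : C(Set.Icc (0 : ℝ) a₁, ℝ)) (h : C(Set.Icc (0 : ℝ) a₂, ℝ)) :
    C(Set.Icc (0 : ℝ) a₁ × Set.Icc (0 : ℝ) a₂, ℝ) :=
  ⟨fun p => g p.1 * h p.2,
    (g.continuous.comp continuous_fst).mul (h.continuous.comp continuous_snd)⟩

open Filter Topology

theorem Real.rpow_le_tangent_line {u ε p : ℝ} (hu : 0 ≤ u) (hε : 0 < ε) (hp₀ : 0 ≤ p)
    (hp₁ : p ≤ 1) : u ^ p ≤ (1 - p) * ε ^ p + p * ε ^ (p - 1) * u := by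
  have hamgm : ε ^ (1 - p) * u ^ p ≤ (1 - p) * ε + p * u :=
    Real.geom_mean_le_arith_mean2_weighted (sub_nonneg.2 hp₁) hp₀ hε.le hu (by ring)
  have hinv : ε ^ (p - 1) * ε ^ (1 - p) = 1 := by
    rw [← Real.rpow_add hε]; simp
  have hsucc : ε ^ (p - 1) * ε = ε ^ p := by
    rw [← Real.rpow_add_one hε.ne']; ring_nf
  calc u ^ p = ε ^ (p - 1) * (ε ^ (1 - p) * u ^ p) := by rw [← mul_assoc, hinv, one_mul]
    _ ≤ ε ^ (p - 1) * ((1 - p) * ε + p * u) := by gcongr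
    _ = (1 - p) * ε ^ p + p * ε ^ (p - 1) * u := by rw [← hsucc]; ring

theorem Real.abs_rpow_eq_sq_rpow_half (a α : ℝ) : |a| ^ α = (a ^ 2) ^ (α / 2) := by
  rw [← sq_abs, ← Real.rpow_natCast, ← Real.rpow_mul (abs_nonneg a), Nat.cast_ofNat,
    mul_div_cancel₀ α two_ne_zero]

section PositiveOperator

variable {X Y : Type*} [TopologicalSpace X] [TopologicalSpace Y] {L : C(X, ℝ) →ₗ[ℝ] C(Y, ℝ)}

theorem apply_le_apply_of_forall_le (hpos : ∀ g, (∀ t, 0 ≤ g t) → ∀ y, 0 ≤ L g y)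
    {f g : C(X, ℝ)} (hfg : ∀ t, f t ≤ g t) (y : Y) : L f y ≤ L g y := by
  have := hpos (g - f) (fun t => by simpa using hfg t) y
  simpa using this

theorem abs_apply_sub_le_of_forall_abs_sub_le (hpos : ∀ g, (∀ t, 0 ≤ g t) → ∀ y, 0 ≤ L g y)
    (hone : L 1 = 1) {f φ : C(X, ℝ)} {c : ℝ} (hfφ : ∀ t, |f t - c| ≤ φ t) (y : Y) :
    |L f y - c| ≤ L φ y := by
  have hlower := apply_le_apply_of_forall_le hpos (f := c • 1 - φ) (g := f) (fun t => by
    simp only [ContinuousMap.sub_apply, ContinuousMap.smul_apply, ContinuousMap.one_apply,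
      smul_eq_mul, mul_one]
    linarith [abs_le.1 (hfφ t)]) y
  have hupper := apply_le_apply_of_forall_le hpos (f := f) (g := c • 1 + φ) (fun t => by
    simp only [ContinuousMap.add_apply, ContinuousMap.smul_apply, ContinuousMap.one_apply,
      smul_eq_mul, mul_one]
    linarith [abs_le.1 (hfφ t)]) y
  simp only [map_sub, map_add, map_smul, hone, ContinuousMap.sub_apply, ContinuousMap.add_apply,
    ContinuousMap.smul_apply, ContinuousMap.one_apply, smul_eq_mul, mul_one] at hlower hupper
  exact abs_le.2 ⟨by linarith, by linarith⟩

theorem apply_le_rpow_apply_of_forall_eq_rpow (hpos : ∀ g, (∀ t, 0 ≤ g t) → ∀ y, 0 ≤ L g y)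
    (hone : L 1 = 1) {g h : C(X, ℝ)} (hg : ∀ t, 0 ≤ g t) {p : ℝ} (hp₀ : 0 ≤ p) (hp₁ : p ≤ 1)
    (hh : ∀ t, h t = g t ^ p) (y : Y) : L h y ≤ L g y ^ p := by
  set A := L g y
  have hA : 0 ≤ A := hpos g hg y
  have hbound : ∀ ε > A, L h y ≤ ε ^ p := by
    intro ε hε
    have hε₀ : 0 < ε := hA.trans_lt hε
    have htangent := apply_le_apply_of_forall_le hpos (f := h)
      (g := ((1 - p) * ε ^ p) • 1 + (p * ε ^ (p - 1)) • g)
      (fun t => by simpa [hh t] using Real.rpow_le_tangent_line (hg t) hε₀ hp₀ hp₁) y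
    simp only [map_add, map_smul, hone, ContinuousMap.add_apply, ContinuousMap.smul_apply,
      ContinuousMap.one_apply, smul_eq_mul, mul_one] at htangent
    calc L h y ≤ (1 - p) * ε ^ p + p * ε ^ (p - 1) * A := htangent
      _ ≤ (1 - p) * ε ^ p + p * ε ^ (p - 1) * ε := by gcongr
      _ = ε ^ p := by rw [mul_assoc, ← Real.rpow_add_one hε₀.ne']; ring_nf
  have hcont : Tendsto (fun ε : ℝ => ε ^ p) (𝓝[>] A) (𝓝 (A ^ p)) :=
    (Real.continuousAt_rpow_const A p (Or.inr hp₀)).tendsto.mono_left nhdsWithin_le_nhds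
  exact ge_of_tendsto hcont (eventually_nhdsWithin_of_forall hbound)

end PositiveOperator

@[simp]
theorem tensorFn_apply {a₁ a₂ : ℝ} (g : C(Set.Icc (0 : ℝ) a₁, ℝ)) (h : C(Set.Icc (0 : ℝ) a₂, ℝ))
    (p : Set.Icc (0 : ℝ) a₁ × Set.Icc (0 : ℝ) a₂) : tensorFn a₁ a₂ g h p = g p.1 * h p.2 :=
  rfl

theorem tensorFn_one_one (a₁ a₂ : ℝ) : tensorFn a₁ a₂ 1 1 = 1 := by
  ext p
  simp

theorem bivariate_lipschitz_rate (a₁ a₂ : ℝ)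
    (L₁ : C(Set.Icc (0 : ℝ) a₁, ℝ) →ₗ[ℝ] C(Set.Icc (0 : ℝ) a₁, ℝ))
    (L₂ : C(Set.Icc (0 : ℝ) a₂, ℝ) →ₗ[ℝ] C(Set.Icc (0 : ℝ) a₂, ℝ))
    (L : C(Set.Icc (0 : ℝ) a₁ × Set.Icc (0 : ℝ) a₂, ℝ) →ₗ[ℝ]
         C(Set.Icc (0 : ℝ) a₁ × Set.Icc (0 : ℝ) a₂, ℝ))
    (hpos₁ : ∀ g, (∀ t, 0 ≤ g t) → ∀ x, 0 ≤ L₁ g x)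
    (hpos₂ : ∀ h, (∀ s, 0 ≤ h s) → ∀ y, 0 ≤ L₂ h y)
    (hpos : ∀ f, (∀ p, 0 ≤ f p) → ∀ p, 0 ≤ L f p)
    (hone₁ : L₁ 1 = 1) (hone₂ : L₂ 1 = 1)
    (hfact : ∀ g h, L (tensorFn a₁ a₂ g h) = tensorFn a₁ a₂ (L₁ g) (L₂ h))
    (M α₁ α₂ : ℝ) (hM : 0 < M) (hα₁ : 0 < α₁) (hα₁' : α₁ ≤ 1)
    (hα₂ : 0 < α₂) (hα₂' : α₂ ≤ 1)
    (f : C(Set.Icc (0 : ℝ) a₁ × Set.Icc (0 : ℝ) a₂, ℝ))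
    (hf : ∀ p p' : Set.Icc (0 : ℝ) a₁ × Set.Icc (0 : ℝ) a₂,
      |f p - f p'| ≤ M * |(p.1 : ℝ) - (p'.1 : ℝ)| ^ α₁ * |(p.2 : ℝ) - (p'.2 : ℝ)| ^ α₂)
    (x : Set.Icc (0 : ℝ) a₁) (y : Set.Icc (0 : ℝ) a₂) :
    |L f (x, y) - f (x, y)| ≤
      M * (L₁ ⟨fun t => ((t : ℝ) - (x : ℝ)) ^ 2, by fun_prop⟩ x) ^ (α₁ / 2)
        * (L₂ ⟨fun s => ((s : ℝ) - (y : ℝ)) ^ 2, by fun_prop⟩ y) ^ (α₂ / 2) := by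
  let g₁ : C(Set.Icc (0 : ℝ) a₁, ℝ) :=
    ⟨fun t => |(t : ℝ) - x| ^ α₁, (Real.continuous_rpow_const hα₁.le).comp (by fun_prop)⟩
  let g₂ : C(Set.Icc (0 : ℝ) a₂, ℝ) :=
    ⟨fun s => |(s : ℝ) - y| ^ α₂, (Real.continuous_rpow_const hα₂.le).comp (by fun_prop)⟩
  let q₁ : C(Set.Icc (0 : ℝ) a₁, ℝ) := ⟨fun t => ((t : ℝ) - x) ^ 2, by fun_prop⟩
  let q₂ : C(Set.Icc (0 : ℝ) a₂, ℝ) := ⟨fun s => ((s : ℝ) - y) ^ 2, by fun_prop⟩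
  have hone : L 1 = 1 := by simpa [hone₁, hone₂, tensorFn_one_one] using hfact 1 1
  have hlip : ∀ p, |f p - f (x, y)| ≤ (M • tensorFn a₁ a₂ g₁ g₂) p := fun p => by
    simpa [g₁, g₂, mul_assoc] using hf p (x, y)
  have hjensen₁ := apply_le_rpow_apply_of_forall_eq_rpow hpos₁ hone₁ (g := q₁) (h := g₁)
    (fun _ => sq_nonneg _) (by positivity) (by linarith)
    (fun t => Real.abs_rpow_eq_sq_rpow_half (t - x) α₁) x
  have hjensen₂ := apply_le_rpow_apply_of_forall_eq_rpow hpos₂ hone₂ (g := q₂) (h := g₂)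
    (fun _ => sq_nonneg _) (by positivity) (by linarith)
    (fun s => Real.abs_rpow_eq_sq_rpow_half (s - y) α₂) y
  calc |L f (x, y) - f (x, y)| ≤ L (M • tensorFn a₁ a₂ g₁ g₂) (x, y) :=
        abs_apply_sub_le_of_forall_abs_sub_le hpos hone hlip _
    _ = M * (L₁ g₁ x * L₂ g₂ y) := by simp [hfact]
    _ ≤ M * ((L₁ q₁ x) ^ (α₁ / 2) * (L₂ q₂ y) ^ (α₂ / 2)) := by
      refine mul_le_mul_of_nonneg_left (mul_le_mul hjensen₁ hjensen₂ ?_ ?_) hM.le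
      · exact hpos₂ g₂ (fun s => by simp only [g₂, ContinuousMap.coe_mk]; positivity) y
      · exact Real.rpow_nonneg (hpos₁ q₁ (fun _ => sq_nonneg _) x) _
    _ = _ := by ring
end
end
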